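/- Let t = a ∪ b ⊆ {1,...,m} with |t| = n+1, and let i ∈ {1,...,m} satisfy max a < i < min b. Choose j ∈ a, k ∈ b, and set s = t∖{j}, u = t∖{k} (both size-n subsets). Then z_{(s),i} · z_{(u),i} < 0, i.e., z_{(s)} and z_{(u)} have strictly opposite signs at coordinate i. -/
import Mathlib


open Finset

/-- `z_{(τ),i} = ∏_{h∈τ}(1 - λ_i/λ_h)`. -/
noncomputable def zTau {m : ℕ} (l : Fin m → ℝ) (τ : Finset (Fin m)) : Fin m → ℝ :=
  fun i => ∏ h ∈ τ, (1 - l i / l h)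

theorem stmt8 {m n : ℕ} (l : Fin m → ℝ) (hpos : ∀ i, 0 < l i) (hanti : StrictAnti l)
    (a b : Finset (Fin m)) (ht : (a ∪ b).card = n + 1) (i : Fin m)
    (ha : ∀ x ∈ a, x < i) (hb : ∀ x ∈ b, i < x)
    (j : Fin m) (hj : j ∈ a) (k : Fin m) (hk : k ∈ b) :
    zTau l ((a ∪ b).erase j) i * zTau l ((a ∪ b).erase k) i < 0 := by
  set t := a ∪ b with htdef
  have hjk : j ≠ k := ne_of_lt (lt_trans (ha j hj) (hb k hk))
  have hjt : j ∈ t := mem_union_left _ hj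
  have hkt : k ∈ t := mem_union_right _ hk
  have hkej : k ∈ t.erase j := mem_erase.2 ⟨hjk.symm, hkt⟩
  have hjek : j ∈ t.erase k := mem_erase.2 ⟨hjk, hjt⟩
  have h1 : zTau l (t.erase j) i = (1 - l i / l k) * zTau l ((t.erase j).erase k) i := by
    rw [zTau, zTau]
    exact (Finset.mul_prod_erase _ _ hkej).symm
  have h2 : zTau l (t.erase k) i = (1 - l i / l j) * zTau l ((t.erase k).erase j) i := by
    rw [zTau, zTau]
    exact (Finset.mul_prod_erase _ _ hjek).symm
  have hcomm : (t.erase j).erase k = (t.erase k).erase j := Finset.erase_right_comm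
  have hP : zTau l ((t.erase k).erase j) i ≠ 0 := by
    rw [zTau]
    apply Finset.prod_ne_zero_iff.2
    intro h hh
    have hht : h ∈ t := mem_of_mem_erase (mem_of_mem_erase hh)
    have hhi : h ≠ i := by
      rcases mem_union.1 hht with h' | h'
      · exact ne_of_lt (ha h h')
      · exact ne_of_gt (hb h h')
    have hne : l h ≠ l i := fun e => hhi (hanti.injective e)
    have hlh : l h ≠ 0 := (hpos h).ne'
    intro e
    have : l i / l h = 1 := by linarith
    exact hne ((div_eq_one_iff_eq hlh).1 this).symm
  have hk0 : 1 - l i / l k < 0 := by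
    have : l k < l i := hanti (hb k hk)
    rw [sub_neg]
    exact (one_lt_div (hpos k)).2 this
  have hj0 : 0 < 1 - l i / l j := by
    have : l i < l j := hanti (ha j hj)
    rw [sub_pos]
    exact (div_lt_one (hpos j)).2 this
  rw [h1, h2, hcomm]
  set P := zTau l ((t.erase k).erase j) i with hPdef
  have heq : (1 - l i / l k) * P * ((1 - l i / l j) * P) =
      ((1 - l i / l k) * (1 - l i / l j)) * (P * P) := by ring
  rw [heq]
  exact mul_neg_of_neg_of_pos (mul_neg_of_neg_of_pos hk0 hj0) (mul_self_pos.2 hP)
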